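/- arXiv:1111.3517 — 2 statements merged into one kernel-verified Lean document; each statement's English description precedes it below -/
import Mathlib

section
/- Let G be a graph of order n with at least one connected component of order greater than two, and let H be any graph. Then γ_R(G □ H) ≤ (n+1)·γ_R(H) − 2γ(H). -/
open Finset

/-- A set `S` is a dominating set of `G` if every vertex outside `S` has a neighbor in `S`. -/
def IsDominatingSet {V : Type*} (G : SimpleGraph V) (S : Set V) : Prop :=
  ∀ v, v ∉ S → ∃ u ∈ S, G.Adj u v

/-- The domination number `γ(G)`. -/
noncomputable def domNum {V : Type*} [Fintype V] (G : SimpleGraph V) : ℕ :=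
  sInf {n | ∃ S : Finset V, IsDominatingSet G ↑S ∧ S.card = n}

/-- A Roman dominating function: values in {0,1,2}, every vertex of value 0 has a
neighbor of value 2. -/
def IsRDF {V : Type*} (G : SimpleGraph V) (f : V → ℕ) : Prop :=
  (∀ v, f v ≤ 2) ∧ ∀ v, f v = 0 → ∃ u, G.Adj u v ∧ f u = 2

/-- The Roman domination number `γ_R(G)`. -/
noncomputable def romanDomNum {V : Type*} [Fintype V] (G : SimpleGraph V) : ℕ :=
  sInf {n | ∃ f : V → ℕ, IsRDF G f ∧ ∑ v, f v = n}

/-- The strong product of graphs. -/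
def strongProd {V W : Type*} (G : SimpleGraph V) (H : SimpleGraph W) :
    SimpleGraph (V × W) where
  Adj x y := x ≠ y ∧ (x.1 = y.1 ∨ G.Adj x.1 y.1) ∧ (x.2 = y.2 ∨ H.Adj x.2 y.2)
  symm := ⟨fun x y => by
    rintro ⟨h, h1, h2⟩
    refine ⟨h.symm, ?_, ?_⟩
    · cases h1 with
      | inl h => exact Or.inl h.symm
      | inr h => exact Or.inr h.symm
    · cases h2 with
      | inl h => exact Or.inl h.symm
      | inr h => exact Or.inr h.symm⟩
  loopless := ⟨fun x => by simp⟩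

/-- `G` has an efficient dominating set: a dominating set whose elements have
pairwise disjoint closed neighborhoods. -/
def HasEfficientDomSet {V : Type*} (G : SimpleGraph V) : Prop :=
  ∃ S : Finset V, IsDominatingSet G ↑S ∧
    ∀ u ∈ S, ∀ v ∈ S, u ≠ v →
      Disjoint (insert u (G.neighborSet u)) (insert v (G.neighborSet v))

/-!
Take a Roman dominating function `f = (V₀, V₁, V₂)` of `H` of weight `γ_R(H)` and a vertex `v` of
`G` with two distinct neighbours `u, w`, which exists because some component has three vertices.
Copy `f` to every `H`-layer of `G □ H`, then raise the `1`s of layer `v` to `2` and drop those of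
layers `u, w` to `0`: they are now dominated from layer `v`. This Roman dominating function weighs
`n γ_R(H) - |V₁|`. Since `V₁ ∪ V₂` dominates `H`, `2 γ(H) ≤ 2 |V₁| + 2 |V₂| = γ_R(H) + |V₁|`.
-/

namespace SimpleGraph
variable {V : Type*} {G : SimpleGraph V}

lemma ConnectedComponent.exists_adj_adj_of_two_lt_card_supp {c : G.ConnectedComponent}
    (hc : 2 < Nat.card c.supp) : ∃ v u w, u ≠ w ∧ G.Adj v u ∧ G.Adj v w := by
  rw [Nat.card_coe_set_eq] at hc
  have reachable {a b : V} (ha : a ∈ c.supp) (hb : b ∈ c.supp) : G.Reachable a b :=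
    ConnectedComponent.exact (ha.trans hb.symm)
  obtain ⟨a, ha⟩ := Set.nonempty_of_ncard_ne_zero (s := c.supp) (by omega)
  obtain ⟨b, hb, hba⟩ := Set.exists_mem_notMem_of_ncard_lt_ncard
    (s := {a}) (t := c.supp) (by rw [Set.ncard_singleton]; omega)
  obtain ⟨walk_ba⟩ := reachable hb ha
  obtain ⟨⟨⟨x, a'⟩, hxa⟩, -, hx, ha'⟩ := walk_ba.exists_boundary_dart {a}ᶜ hba (by simp)
  simp only [Set.mem_compl_iff, Set.mem_singleton_iff, not_not] at hx ha'
  subst ha'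
  obtain ⟨y, hy, hyax⟩ := Set.exists_mem_notMem_of_ncard_lt_ncard
    (s := {a', x}) (t := c.supp) ((Set.ncard_pair hxa.ne.symm).trans_lt hc)
  obtain ⟨walk_ya⟩ := reachable hy ha
  obtain ⟨⟨⟨p, q⟩, hpq⟩, -, hp, hq⟩ := walk_ya.exists_boundary_dart {a', x}ᶜ hyax (by simp)
  simp only [Set.mem_compl_iff, Set.mem_insert_iff, Set.mem_singleton_iff, not_or] at hp
  rw [Set.mem_compl_iff, not_not] at hq
  rcases hq with rfl | rfl
  · exact ⟨q, p, x, hp.2, hpq.symm, hxa.symm⟩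
  · exact ⟨q, p, a', hp.1, hpq.symm, hxa⟩

end SimpleGraph

section

variable {V W : Type*}

lemma domNum_le_card [Fintype V] {G : SimpleGraph V} {S : Finset V}
    (hS : IsDominatingSet G ↑S) : domNum G ≤ S.card :=
  Nat.sInf_le ⟨S, hS, rfl⟩

namespace IsRDF

variable {G : SimpleGraph V} {f : V → ℕ}

lemma romanDomNum_le_sum [Fintype V] (hf : IsRDF G f) : romanDomNum G ≤ ∑ v, f v :=
  Nat.sInf_le ⟨f, hf, rfl⟩

lemma isDominatingSet_support (hf : IsRDF G f) : IsDominatingSet G {v | f v ≠ 0} := by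
  intro v hv
  obtain ⟨u, huv, hu⟩ := hf.2 v (by simpa using hv)
  exact ⟨u, by simp [hu], huv⟩

lemma two_mul_domNum_le [Fintype V] (hf : IsRDF G f) :
    2 * domNum G ≤ ∑ v, f v + #{v | f v = 1} := by
  have hsupp := domNum_le_card (S := {v | f v ≠ 0}) (by simpa using hf.isDominatingSet_support)
  have hweight : ∀ v, 2 * (if f v ≠ 0 then 1 else 0) = f v + if f v = 1 then 1 else 0 := by
    intro v
    have := hf.1 v
    split_ifs <;> omega
  calc 2 * domNum G ≤ 2 * #{v | f v ≠ 0} := by omega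
    _ = ∑ v, f v + #{v | f v = 1} := by
      simp only [card_filter, mul_sum, hweight, sum_add_distrib]

end IsRDF

lemma exists_isRDF_sum_eq_romanDomNum [Fintype V] (G : SimpleGraph V) :
    ∃ f, IsRDF G f ∧ ∑ v, f v = romanDomNum G :=
  Nat.sInf_mem (s := {n | ∃ f, IsRDF G f ∧ ∑ v, f v = n})
    ⟨_, fun _ ↦ 1, ⟨fun _ ↦ one_le_two, fun _ h ↦ absurd h one_ne_zero⟩, rfl⟩

section liftRDF

variable [DecidableEq V] (v : V) (N : Finset V) (f : W → ℕ)

def liftRDF (p : V × W) : ℕ :=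
  if f p.2 = 1 then (if p.1 = v then 2 else if p.1 ∈ N then 0 else 1) else f p.2

variable {v N f}

lemma isRDF_liftRDF {G : SimpleGraph V} {H : SimpleGraph W} (hf : IsRDF H f)
    (hN : ∀ x ∈ N, G.Adj v x) : IsRDF (G.boxProd H) (liftRDF v N f) := by
  refine ⟨fun ⟨x, y⟩ ↦ ?_, fun ⟨x, y⟩ hxy ↦ ?_⟩
  · have := hf.1 y
    unfold liftRDF
    split_ifs <;> omega
  by_cases hy : f y = 1
  · have hx : x ∈ N := by
      simp only [liftRDF, hy, if_true] at hxy
      split_ifs at hxy with hxv hxN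
      exact hxN
    exact ⟨(v, y), SimpleGraph.boxProd_adj.2 (Or.inl ⟨hN x hx, rfl⟩), by simp [liftRDF, hy]⟩
  · obtain ⟨z, hzy, hz⟩ := hf.2 y (by simpa [liftRDF, hy] using hxy)
    exact ⟨(x, z), SimpleGraph.boxProd_adj.2 (Or.inr ⟨hzy, rfl⟩), by simp [liftRDF, hz]⟩

lemma cast_liftRDF (hv : v ∉ N) (x : V) (y : W) :
    (liftRDF v N f (x, y) : ℤ) =
      f y + ((if x = v then 1 else 0) - (if x ∈ N then 1 else 0)) * (if f y = 1 then 1 else 0) := by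
  unfold liftRDF
  split_ifs <;> simp_all

lemma sum_liftRDF [Fintype V] [Fintype W] (hv : v ∉ N) :
    (∑ p, liftRDF v N f p : ℤ) = Fintype.card V * ∑ y, f y + (1 - #N) * #{y | f y = 1} := by
  calc (∑ p, liftRDF v N f p : ℤ)
      = ∑ x, ∑ y, ((f y : ℤ) + ((if x = v then 1 else 0) - (if x ∈ N then 1 else 0)) *
          (if f y = 1 then 1 else 0)) := by
        rw [Fintype.sum_prod_type]
        exact sum_congr rfl fun x _ ↦ sum_congr rfl fun y _ ↦ cast_liftRDF hv x y
    _ = _ := by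
        simp only [sum_add_distrib]
        rw [← Fintype.sum_mul_sum, sum_sub_distrib, sum_ite_eq', if_pos (mem_univ v), sum_boole,
          sum_boole, filter_univ_mem, sum_const, card_univ, nsmul_eq_mul, Nat.cast_sum]

end liftRDF

lemma IsRDF.romanDomNum_boxProd_add_le [Fintype V] [Fintype W] {G : SimpleGraph V}
    {H : SimpleGraph W} {f : W → ℕ} (hf : IsRDF H f) {v : V} {N : Finset V}
    (hN : ∀ x ∈ N, G.Adj v x) :
    (romanDomNum (G.boxProd H) : ℤ) + (#N - 1) * #{y | f y = 1} ≤
      Fintype.card V * ∑ y, f y := by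
  classical
  have hv : v ∉ N := fun hv ↦ (hN v hv).ne rfl
  have hle : (romanDomNum (G.boxProd H) : ℤ) ≤ ∑ p, (liftRDF v N f p : ℤ) :=
    mod_cast (isRDF_liftRDF hf hN).romanDomNum_le_sum
  rw [sum_liftRDF hv] at hle
  linarith

end

theorem stmt13 {V W : Type*} [Fintype V] [Fintype W]
    (G : SimpleGraph V) (H : SimpleGraph W)
    (hG : ∃ c : G.ConnectedComponent, 2 < Nat.card c.supp) :
    (romanDomNum (G.boxProd H) : ℤ) ≤
      (Fintype.card V + 1) * romanDomNum H - 2 * domNum H := by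
  classical
  obtain ⟨c, hc⟩ := hG
  obtain ⟨v, u, w, huw, hvu, hvw⟩ := c.exists_adj_adj_of_two_lt_card_supp hc
  obtain ⟨f, hf, hsum⟩ := exists_isRDF_sum_eq_romanDomNum H
  have hlift := hf.romanDomNum_boxProd_add_le (G := G) (v := v) (N := {u, w}) (by simp [hvu, hvw])
  have hdom : (2 * domNum H : ℤ) ≤ ∑ y, f y + #{y | f y = 1} := mod_cast hf.two_mul_domNum_le
  rw [card_pair huw] at hlift
  rw [← hsum]
  push_cast at hlift hdom ⊢
  linarith
end

section
/- For any graphs G and H of orders n₁ and n₂ respectively, γ_R(G □ H) ≤ 2γ(G)γ(H) + (n₁ − γ(G))(n₂ − γ(H)). -/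
open Finset

/-!
Take minimum dominating sets `S` of `G` and `T` of `H` and weight `(x, y)` by `2` on `S × T`,
by `1` on `Sᶜ × Tᶜ` and by `0` elsewhere. A vertex of weight `0` has exactly one coordinate
outside its dominating set; moving that coordinate to a dominating neighbour lands in `S × T`.
So this is a Roman dominating function of `G □ H` of weight `2|S||T| + |Sᶜ||Tᶜ|`.
-/

section

variable {V W : Type*}

lemma exists_isDominatingSet_card_eq_domNum [Fintype V] (G : SimpleGraph V) :
    ∃ S : Finset V, IsDominatingSet G ↑S ∧ S.card = domNum G :=
  Nat.sInf_mem (s := {n | ∃ S : Finset V, IsDominatingSet G ↑S ∧ S.card = n})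
    ⟨_, univ, fun v hv => absurd (mem_univ v) hv, rfl⟩

lemma romanDomNum_le_sum [Fintype V] {G : SimpleGraph V} {f : V → ℕ} (hf : IsRDF G f) :
    romanDomNum G ≤ ∑ v, f v :=
  Nat.sInf_le ⟨f, hf, rfl⟩

section BoxProd

variable [Fintype V] [Fintype W] [DecidableEq V] [DecidableEq W]

def boxProdRomanWeight (S : Finset V) (T : Finset W) (p : V × W) : ℕ :=
  2 * (if p ∈ S ×ˢ T then 1 else 0) + if p ∈ Sᶜ ×ˢ Tᶜ then 1 else 0

lemma boxProdRomanWeight_of_mem {S : Finset V} {T : Finset W} {x : V} {y : W} (hx : x ∈ S)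
    (hy : y ∈ T) : boxProdRomanWeight S T (x, y) = 2 := by
  simp [boxProdRomanWeight, hx, hy]

lemma isRDF_boxProdRomanWeight {G : SimpleGraph V} {H : SimpleGraph W} {S : Finset V}
    {T : Finset W} (hS : IsDominatingSet G ↑S) (hT : IsDominatingSet H ↑T) :
    IsRDF (G.boxProd H) (boxProdRomanWeight S T) := by
  refine ⟨fun ⟨x, y⟩ => ?_, fun ⟨x, y⟩ h0 => ?_⟩
  · simp only [boxProdRomanWeight, mem_product, mem_compl]
    split_ifs <;> simp_all
  · simp only [boxProdRomanWeight, mem_product, mem_compl] at h0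
    by_cases hx : x ∈ S
    · have hy : y ∉ T := by simp_all
      obtain ⟨v, hv, hvy⟩ := hT y hy
      exact ⟨(x, v), SimpleGraph.boxProd_adj.2 (.inr ⟨hvy, rfl⟩),
        boxProdRomanWeight_of_mem hx hv⟩
    · have hy : y ∈ T := by simp_all
      obtain ⟨u, hu, hux⟩ := hS x hx
      exact ⟨(u, y), SimpleGraph.boxProd_adj.2 (.inl ⟨hux, rfl⟩),
        boxProdRomanWeight_of_mem hu hy⟩

lemma sum_boxProdRomanWeight (S : Finset V) (T : Finset W) :
    ∑ p, boxProdRomanWeight S T p =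
      2 * S.card * T.card + (Fintype.card V - S.card) * (Fintype.card W - T.card) := by
  simp only [boxProdRomanWeight, sum_add_distrib, ← mul_sum, sum_boole, Nat.cast_id,
    filter_mem_eq_of_subset (subset_univ _), card_product, card_compl, mul_assoc]

end BoxProd

end

theorem stmt16 {V W : Type*} [Fintype V] [Fintype W]
    (G : SimpleGraph V) (H : SimpleGraph W) :
    (romanDomNum (G.boxProd H) : ℤ) ≤
      2 * domNum G * domNum H +
        ((Fintype.card V : ℤ) - domNum G) * ((Fintype.card W : ℤ) - domNum H) := by
  classical
  obtain ⟨S, hS, hSγ⟩ := exists_isDominatingSet_card_eq_domNum G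
  obtain ⟨T, hT, hTγ⟩ := exists_isDominatingSet_card_eq_domNum H
  rw [← hSγ, ← hTγ]
  have hle := romanDomNum_le_sum (isRDF_boxProdRomanWeight hS hT)
  rw [sum_boxProdRomanWeight] at hle
  zify [card_le_univ S, card_le_univ T] at hle
  exact hle
end
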